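/- (Lemma 3, weak discretizability.) There exists a sequence (S_k)_{k∈ℕ} of finite subsets of Ξ such that the optimal values converge: v(S_k) → v(Ξ) as k → ∞. -/
import Mathlib


/-- The optimal value (in the extended reals) of the semi-infinite dual program with
constraints indexed by the subset `S` of the support. -/
noncomputable def dualValue {E : Type*} [NormedAddCommGroup E] [NormedSpace ℝ E]
    {N : ℕ} (ξhat : Fin N → E) (phat : Fin N → ℝ) (ε : ℝ) (c : E → ℝ)
    (S : Set E) : EReal :=
  sInf { w : EReal | ∃ α : ℝ, ∃ β : Fin N → ℝ, 0 ≤ α ∧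
    (∀ s, ∀ ξ ∈ S, c ξ ≤ α * ‖ξhat s - ξ‖ + β s) ∧
    w = ((ε * α + ∑ s, phat s * β s : ℝ) : EReal) }

open Filter Metric

section aux
variable {E : Type*} [NormedAddCommGroup E] [NormedSpace ℝ E]
  {N : ℕ} {ξhat : Fin N → E} {phat : Fin N → ℝ} {ε : ℝ} {c : E → ℝ}

lemma dualValue_mono {S T : Set E} (hST : S ⊆ T) :
    dualValue ξhat phat ε c S ≤ dualValue ξhat phat ε c T := by
  apply sInf_le_sInf
  rintro w ⟨α, β, h0, hcon, rfl⟩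
  exact ⟨α, β, h0, fun s ξ hξ => hcon s ξ (hST hξ), rfl⟩

lemma dualValue_le {S : Set E} {α : ℝ} {β : Fin N → ℝ} (h0 : 0 ≤ α)
    (hcon : ∀ s, ∀ ξ ∈ S, c ξ ≤ α * ‖ξhat s - ξ‖ + β s) :
    dualValue ξhat phat ε c S ≤ ((ε * α + ∑ s, phat s * β s : ℝ) : EReal) :=
  sInf_le ⟨α, β, h0, hcon, rfl⟩

lemma le_dualValue {S : Set E} (hξ : ∀ s, ξhat s ∈ S) (hε : 0 ≤ ε)
    (hp0 : ∀ s, 0 ≤ phat s) :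
    ((∑ s, phat s * c (ξhat s) : ℝ) : EReal) ≤ dualValue ξhat phat ε c S := by
  apply le_sInf
  rintro w ⟨α, β, h0, hcon, rfl⟩
  have hβ : ∀ s, c (ξhat s) ≤ β s := fun s => by
    have := hcon s (ξhat s) (hξ s); simpa using this
  have : (∑ s, phat s * c (ξhat s) : ℝ) ≤ ε * α + ∑ s, phat s * β s := by
    have h1 : (∑ s, phat s * c (ξhat s) : ℝ) ≤ ∑ s, phat s * β s :=
      Finset.sum_le_sum fun s _ => mul_le_mul_of_nonneg_left (hβ s) (hp0 s)
    nlinarith [mul_nonneg hε h0]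
  exact_mod_cast this

lemma exists_lt_of_dualValue_lt {S : Set E} {b : EReal}
    (h : dualValue ξhat phat ε c S < b) :
    ∃ α : ℝ, ∃ β : Fin N → ℝ, 0 ≤ α ∧ (∀ s, ∀ ξ ∈ S, c ξ ≤ α * ‖ξhat s - ξ‖ + β s) ∧
      ((ε * α + ∑ s, phat s * β s : ℝ) : EReal) < b := by
  obtain ⟨w, hw, hlt⟩ := sInf_lt_iff.mp h
  obtain ⟨α, β, h0, hcon, rfl⟩ := hw
  exact ⟨α, β, h0, hcon, hlt⟩

end aux

/-- Lemma 3, weak discretizability: there is a sequence of finite subsets of `Ξ`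
whose optimal values converge to the optimal value over `Ξ`. -/
theorem weakly_discretizable
    {E : Type*} [NormedAddCommGroup E] [NormedSpace ℝ E]
    {N : ℕ} (hN : 1 ≤ N)
    (Ξ : Set E) (hne : Ξ.Nonempty) (hcomp : IsCompact Ξ)
    (ξhat : Fin N → E) (hmem : ∀ s, ξhat s ∈ Ξ)
    (phat : Fin N → ℝ) (hp0 : ∀ s, 0 ≤ phat s) (hp1 : ∑ s, phat s = 1)
    (ε : ℝ) (hε : 0 ≤ ε) (c : E → ℝ) (hc : Continuous c) :
    ∃ S : ℕ → Set E, (∀ k, S k ⊆ Ξ) ∧ (∀ k, (S k).Finite) ∧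
      Filter.Tendsto (fun k => dualValue ξhat phat ε c (S k)) Filter.atTop
        (nhds (dualValue ξhat phat ε c Ξ)) := by
  classical
  obtain ⟨Mc, hMc⟩ : ∃ M : ℝ, ∀ ξ ∈ Ξ, c ξ ≤ M := by
    obtain ⟨x, -, hx⟩ := hcomp.exists_isMaxOn hne hc.continuousOn
    exact ⟨c x, fun ξ hξ => hx hξ⟩
  set m : ℝ := ∑ s, phat s * c (ξhat s) with hm
  have hub : ∀ S : Set E, S ⊆ Ξ → dualValue ξhat phat ε c S ≤ (Mc : EReal) := by
    intro S hS
    have hcon : ∀ s, ∀ ξ ∈ S, c ξ ≤ (0:ℝ) * ‖ξhat s - ξ‖ + (fun _ : Fin N => Mc) s := by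
      intro s ξ hξ; simpa using hMc ξ (hS hξ)
    refine le_trans (dualValue_le le_rfl hcon) (le_of_eq ?_)
    norm_cast
    rw [mul_zero, ← Finset.sum_mul, hp1]; ring
  have hlb : ∀ S : Set E, (∀ s, ξhat s ∈ S) →
      ((m : ℝ) : EReal) ≤ dualValue ξhat phat ε c S :=
    fun S h => le_dualValue h hε hp0
  have hΞub := hub Ξ subset_rfl
  have hΞlb := hlb Ξ hmem
  set vΞ := dualValue ξhat phat ε c Ξ with hvΞ
  have hvtop : vΞ ≠ ⊤ := (lt_of_le_of_lt hΞub (EReal.coe_lt_top Mc)).ne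
  have hvbot : vΞ ≠ ⊥ := (lt_of_lt_of_le (EReal.bot_lt_coe m) hΞlb).ne'
  set l : ℝ := vΞ.toReal with hldef
  have hlv : (l : EReal) = vΞ := EReal.coe_toReal hvtop hvbot
  have hml : m ≤ l := by rw [← hlv] at hΞlb; exact_mod_cast hΞlb
  have hlM : l ≤ Mc := by rw [← hlv] at hΞub; exact_mod_cast hΞub
  -- it suffices to build S with the following properties
  suffices h : ∃ S : ℕ → Set E, (∀ k, S k ⊆ Ξ) ∧ (∀ k, (S k).Finite) ∧
      (∀ k, ∀ s, ξhat s ∈ S k) ∧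
      (∀ η : ℝ, 0 < η → ∀ᶠ k in atTop,
        ((l - η : ℝ) : EReal) ≤ dualValue ξhat phat ε c (S k)) by
    obtain ⟨S, hsub, hfin, hS0, hkey⟩ := h
    refine ⟨S, hsub, hfin, ?_⟩
    have hle : ∀ k, dualValue ξhat phat ε c (S k) ≤ vΞ :=
      fun k => dualValue_mono (hsub k)
    rw [tendsto_order]
    constructor
    · intro a ha
      induction a using EReal.rec with
      | bot => exact Eventually.of_forall fun k =>
          lt_of_lt_of_le (EReal.bot_lt_coe m) (hlb _ (hS0 k))
      | coe a =>
        have hal : a < l := by rw [← hlv] at ha; exact_mod_cast ha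
        filter_upwards [hkey ((l - a)/2) (by linarith)] with k hk
        refine lt_of_lt_of_le ?_ hk
        exact_mod_cast (by linarith : a < l - (l - a)/2)
      | top => exact absurd ha (not_lt.2 le_top)
    · intro b hb
      exact Eventually.of_forall fun k => lt_of_le_of_lt (hle k) hb
  rcases eq_or_lt_of_le hε with hε0 | hε0
  · -- case ε = 0 : constant sequence range ξhat works
    refine ⟨fun _ => Set.range ξhat, fun k ξ ⟨s, hs⟩ => hs ▸ hmem s,
      fun k => Set.finite_range ξhat, fun k s => ⟨s, rfl⟩, ?_⟩
    -- show l ≤ m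
    have hlm : l ≤ m := by
      by_contra hcon'
      push_neg at hcon'
      set η := (l - m)/2 with hη
      have hηpos : 0 < η := by simp [hη]; linarith
      -- build a feasible point for Ξ with value m + η
      have hcont : ∀ s : Fin N, ∃ δ > 0, ∀ ξ,
          dist ξ (ξhat s) < δ → dist (c ξ) (c (ξhat s)) < η :=
        fun s => Metric.continuous_iff.mp hc (ξhat s) η hηpos
      choose δ hδpos hδ using hcont
      have huniv : (Finset.univ : Finset (Fin N)).Nonempty :=
        ⟨⟨0, hN⟩, Finset.mem_univ _⟩
      set αf : Fin N → ℝ := fun s => max 0 ((Mc - c (ξhat s)) / δ s) with hαf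
      set α : ℝ := Finset.univ.sup' huniv αf with hα
      have hαs : ∀ s, αf s ≤ α := fun s => Finset.le_sup' αf (Finset.mem_univ s)
      have hα0 : 0 ≤ α := le_trans (le_max_left _ _) (hαs ⟨0, hN⟩)
      have hcon2 : ∀ s, ∀ ξ ∈ Ξ, c ξ ≤ α * ‖ξhat s - ξ‖ + (fun s => c (ξhat s) + η) s := by
        intro s ξ hξ
        simp only
        by_cases hd : dist ξ (ξhat s) < δ s
        · have h1 := hδ s ξ hd
          rw [Real.dist_eq] at h1
          have h2 : c ξ - c (ξhat s) ≤ |c ξ - c (ξhat s)| := le_abs_self _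
          have h3 : 0 ≤ α * ‖ξhat s - ξ‖ := mul_nonneg hα0 (norm_nonneg _)
          linarith
        · push_neg at hd
          have hnorm : δ s ≤ ‖ξhat s - ξ‖ := by
            rw [norm_sub_rev, ← dist_eq_norm]; exact hd
          have h1 : (Mc - c (ξhat s)) / δ s ≤ α :=
            le_trans (le_max_right _ _) (hαs s)
          have h2 : Mc - c (ξhat s) ≤ α * δ s := by
            rw [div_le_iff₀ (hδpos s)] at h1; linarith
          have h3 : α * δ s ≤ α * ‖ξhat s - ξ‖ :=
            mul_le_mul_of_nonneg_left hnorm hα0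
          have h4 := hMc ξ hξ
          linarith
      have hval := dualValue_le (ξhat := ξhat) (phat := phat) (ε := ε) hα0 hcon2
      have hveq : (ε * α + ∑ s, phat s * (c (ξhat s) + η) : ℝ) = m + η := by
        rw [← hε0]
        simp only [mul_add, Finset.sum_add_distrib, ← Finset.sum_mul, hp1]
        ring
      rw [hveq] at hval
      have : l ≤ m + η := by
        rw [← hvΞ, ← hlv] at hval; exact_mod_cast hval
      rw [hη] at this; linarith
    intro η hη
    refine Eventually.of_forall fun k => le_trans ?_ (hlb _ fun s => ⟨s, rfl⟩)
    exact_mod_cast (by linarith : l - η ≤ m)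
  · -- case ε > 0 : finite nets
    have hnet : ∀ k : ℕ, ∃ t : Set E, t ⊆ Ξ ∧ t.Finite ∧
        Ξ ⊆ ⋃ x ∈ t, ball x (1/((k:ℝ)+1)) :=
      fun k => hcomp.finite_cover_balls (by positivity)
    choose t ht1 ht2 ht3 using hnet
    set S : ℕ → Set E := fun k => Set.range ξhat ∪ t k with hS
    have hsub : ∀ k, S k ⊆ Ξ := fun k =>
      Set.union_subset (fun ξ ⟨s, hs⟩ => hs ▸ hmem s) (ht1 k)
    have hS0 : ∀ k, ∀ s, ξhat s ∈ S k := fun k s => Or.inl ⟨s, rfl⟩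
    refine ⟨S, hsub, fun k => (Set.finite_range ξhat).union (ht2 k), hS0, ?_⟩
    intro η hη
    obtain ⟨δ, hδ0, hδ⟩ := Metric.uniformContinuousOn_iff.mp
      (hcomp.uniformContinuousOn_of_continuous hc.continuousOn) (η/3) (by linarith)
    set C : ℝ := (Mc - m + η/3) / ε with hC
    have hC0 : 0 ≤ C := div_nonneg (by linarith) hε0.le
    have hδk : Tendsto (fun k : ℕ => 1/((k:ℝ)+1)) atTop (nhds 0) :=
      tendsto_one_div_add_atTop_nhds_zero_nat
    have ev1 : ∀ᶠ k : ℕ in atTop, 1/((k:ℝ)+1) < δ := hδk.eventually_lt_const hδ0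
    have ev2 : ∀ᶠ k : ℕ in atTop, C * (1/((k:ℝ)+1)) < η/3 := by
      have : Tendsto (fun k : ℕ => C * (1/((k:ℝ)+1))) atTop (nhds 0) := by
        simpa using hδk.const_mul C
      exact this.eventually_lt_const (by linarith)
    filter_upwards [ev1, ev2] with k hk1 hk2
    set δk : ℝ := 1/((k:ℝ)+1) with hδkdef
    have hδk0 : 0 ≤ δk := by positivity
    -- the value over S k is a real number
    set vk := dualValue ξhat phat ε c (S k) with hvk
    have hvklb := hlb (S k) (hS0 k)
    have hvkub : vk ≤ vΞ := dualValue_mono (hsub k)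
    have hvktop : vk ≠ ⊤ := (lt_of_le_of_lt (hvkub.trans hΞub) (EReal.coe_lt_top Mc)).ne
    have hvkbot : vk ≠ ⊥ := (lt_of_lt_of_le (EReal.bot_lt_coe m) hvklb).ne'
    set r : ℝ := vk.toReal with hrdef
    have hrv : (r : EReal) = vk := EReal.coe_toReal hvktop hvkbot
    have hrl : r ≤ l := by
      rw [← hlv, ← hrv] at hvkub; exact_mod_cast hvkub
    -- pick a near-optimal feasible point for S k
    have hlt : vk < ((r + η/3 : ℝ) : EReal) := by
      rw [← hrv]; exact_mod_cast (by linarith : r < r + η/3)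
    obtain ⟨α, β, hα0, hcon, hwlt⟩ := exists_lt_of_dualValue_lt hlt
    have hwlt' : ε * α + ∑ s, phat s * β s < r + η/3 := by exact_mod_cast hwlt
    -- bound α
    have hβ : ∀ s, c (ξhat s) ≤ β s := fun s => by
      have := hcon s (ξhat s) (hS0 k s); simpa using this
    have hmβ : m ≤ ∑ s, phat s * β s :=
      Finset.sum_le_sum fun s _ => mul_le_mul_of_nonneg_left (hβ s) (hp0 s)
    have hαC : α ≤ C := by
      rw [hC, le_div_iff₀ hε0]
      have : ε * α < r + η/3 - m := by linarith
      nlinarith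
    have hαδ : α * δk < η/3 :=
      lt_of_le_of_lt (mul_le_mul_of_nonneg_right hαC hδk0) hk2
    -- build feasible point for Ξ
    have hconΞ : ∀ s, ∀ ξ ∈ Ξ,
        c ξ ≤ α * ‖ξhat s - ξ‖ + (fun s => β s + (α * δk + η/3)) s := by
      intro s ξ hξ
      obtain ⟨d, hd, hball⟩ := Set.mem_iUnion₂.mp (ht3 k hξ)
      have hdist : dist ξ d < δk := mem_ball.mp hball
      have hcd : dist (c ξ) (c d) < η/3 :=
        hδ ξ hξ d (ht1 k hd) (lt_trans hdist hk1)
      rw [Real.dist_eq] at hcd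
      have h1 : c ξ - c d ≤ |c ξ - c d| := le_abs_self _
      have h2 : c d ≤ α * ‖ξhat s - d‖ + β s := hcon s d (Or.inr hd)
      have h3 : ‖ξhat s - d‖ ≤ ‖ξhat s - ξ‖ + ‖ξ - d‖ :=
        norm_sub_le_norm_sub_add_norm_sub _ _ _
      have h4 : ‖ξ - d‖ < δk := by rw [← dist_eq_norm]; exact hdist
      have h5 : α * ‖ξhat s - d‖ ≤ α * (‖ξhat s - ξ‖ + δk) :=
        mul_le_mul_of_nonneg_left (by linarith) hα0
      simp only
      nlinarith
    have hval := dualValue_le (ξhat := ξhat) (phat := phat) (ε := ε) hα0 hconΞ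
    have hveq : (ε * α + ∑ s, phat s * (β s + (α * δk + η/3)) : ℝ)
        = (ε * α + ∑ s, phat s * β s) + (α * δk + η/3) := by
      simp only [mul_add, Finset.sum_add_distrib, ← Finset.sum_mul, hp1]
      ring
    rw [hveq] at hval
    have hlval : l ≤ (ε * α + ∑ s, phat s * β s) + (α * δk + η/3) := by
      rw [← hvΞ, ← hlv] at hval; exact_mod_cast hval
    rw [← hrv]
    exact_mod_cast (by linarith : l - η ≤ r)
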